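/- arXiv:1210.1152 — 7 statements merged into one kernel-verified Lean document; each statement's English description precedes it below -/
import Mathlib

section
/- Let X be a metric space and suppose X is uniformly perfect with constants ν > 0 and r_* ∈ ℝ ∪ {−∞}, and assume moreover that for every x ∈ X and every r > r_* the set X \ B(x, e^{−r}) is nonempty. Then for every β ≥ ν + log 4 + log(4/3), X is β-diffuse with respect to points: for every x ∈ X, every r > r_*, and every point x̄ ∈ X, there exists x' ∈ X such that B(x', e^{−(r+β)}) ⊆ B(x, e^{−r}) \ B(x̄, e^{−(r+β)}). -/
open Metric Set

/-- A uniformly perfect metric space (with constants `ν > 0`,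
`r_* ∈ ℝ ∪ {−∞}`), in which every ball `B(x, e^{−r})` with `r > r_*` has nonempty
complement, is `β`-diffuse with respect to points for every
`β ≥ ν + log 4 + log (4/3)`. -/
theorem stmt0 {X : Type*} [MetricSpace X]
    (ν : ℝ) (hν : 0 < ν) (rstar : EReal)
    -- uniform perfectness with constants ν, r_*
    (hup : ∀ (x : X) (r : ℝ), rstar < (r : EReal) →
      (univ \ closedBall x (Real.exp (-r))).Nonempty →
      (closedBall x (Real.exp (-r)) \ closedBall x (Real.exp (-(ν + r)))).Nonempty)
    -- every such ball has nonempty complement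
    (hne : ∀ (x : X) (r : ℝ), rstar < (r : EReal) →
      (univ \ closedBall x (Real.exp (-r))).Nonempty)
    (β : ℝ) (hβ : ν + Real.log 4 + Real.log (4 / 3) ≤ β) :
    ∀ (x : X) (r : ℝ), rstar < (r : EReal) → ∀ xbar : X,
      ∃ x' : X, closedBall x' (Real.exp (-(r + β))) ⊆
        closedBall x (Real.exp (-r)) \ closedBall xbar (Real.exp (-(r + β))) := by
  intro x r hr xbar
  set c : ℝ := Real.log (4 / 3) with hc_def
  have hc : 0 < c := Real.log_pos (by norm_num)
  have hexpc : Real.exp (-c) = 3 / 4 := by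
    rw [Real.exp_neg, hc_def, Real.exp_log (by norm_num)]
    norm_num
  set r' : ℝ := r + c with hr'_def
  have hr' : rstar < (r' : EReal) := lt_of_lt_of_le hr (by
    exact_mod_cast le_add_of_nonneg_right hc.le)
  obtain ⟨y, hy1, hy2⟩ := hup x r' hr' (hne x r' hr')
  set E : ℝ := Real.exp (-(ν + r)) with hE_def
  set F : ℝ := Real.exp (-r) with hF_def
  set ρ : ℝ := Real.exp (-(r + β)) with hρ_def
  have hE0 : 0 < E := Real.exp_pos _
  have hρ0 : 0 < ρ := Real.exp_pos _
  have hEF : E ≤ F := Real.exp_le_exp.mpr (by linarith)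
  have hexp_r' : Real.exp (-r') = 3 / 4 * F := by
    rw [hr'_def, show -(r + c) = -r + -c by ring, Real.exp_add, hexpc, hF_def]
    ring
  have hexp_nr' : Real.exp (-(ν + r')) = 3 / 4 * E := by
    rw [hr'_def, show -(ν + (r + c)) = -(ν + r) + -c by ring, Real.exp_add, hexpc, hE_def]
    ring
  have hdy : 3 / 4 * E < dist y x := by
    have := not_le.mp (fun h => hy2 (mem_closedBall.mpr h))
    rwa [hexp_nr'] at this
  have hdy' : dist y x ≤ 3 / 4 * F := by
    have := mem_closedBall.mp hy1
    rwa [hexp_r'] at this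
  have hρE : ρ ≤ 3 / 16 * E := by
    have h316 : (3 / 16 : ℝ) = Real.exp (Real.log (3 / 16)) :=
      (Real.exp_log (by norm_num)).symm
    have hlog : Real.log (3 / 16) = -(Real.log 4 + Real.log (4 / 3)) := by
      rw [← Real.log_mul (by norm_num) (by norm_num), show (4 : ℝ) * (4 / 3) = 16 / 3 by norm_num,
        ← Real.log_inv]
      norm_num
    rw [hρ_def, hE_def, h316, ← Real.exp_add]
    apply Real.exp_le_exp.mpr
    rw [hlog]
    linarith
  -- one of x, y is at distance ≥ dist y x / 2 from xbar
  have htri : dist y x ≤ dist y xbar + dist xbar x := dist_triangle y xbar x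
  rcases le_or_gt (dist y x / 2) (dist x xbar) with hfar | hfar
  · -- use x' = x
    refine ⟨x, fun z hz => ?_⟩
    have hzx : dist z x ≤ ρ := mem_closedBall.mp hz
    constructor
    · exact mem_closedBall.mpr (by linarith)
    · intro hmem
      have hz2 : dist z xbar ≤ ρ := mem_closedBall.mp hmem
      have : dist x xbar ≤ dist x z + dist z xbar := dist_triangle x z xbar
      rw [dist_comm x z] at this
      linarith
  · -- use x' = y
    refine ⟨y, fun z hz => ?_⟩
    have hzy : dist z y ≤ ρ := mem_closedBall.mp hz
    have hfar' : dist y x / 2 ≤ dist y xbar := by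
      have h2 : dist xbar x = dist x xbar := dist_comm _ _
      linarith
    constructor
    · have : dist z x ≤ dist z y + dist y x := dist_triangle z y x
      exact mem_closedBall.mpr (by linarith)
    · intro hmem
      have hz2 : dist z xbar ≤ ρ := mem_closedBall.mp hmem
      have : dist y xbar ≤ dist y z + dist z xbar := dist_triangle y z xbar
      rw [dist_comm y z] at this
      linarith
end

section
/- Let X̄ be a proper metric space, X ⊆ X̄ a nonempty closed subset, t_* ∈ ℝ ∪ {−∞}, Ω = X × (t_*, ∞), and let ψ̄ be a monotonic function with induced function ψ. Let 𝒮 be a nonempty collection of subsets of X̄, let μ be a locally finite Borel measure on X for which all relevant sets are Borel, and let F = (Λ, R_λ, s_λ) be a nested and discrete family of resonant sets in X̄. Assume: (i) (Ω, ψ, μ) is absolutely (δ, c_δ)-decaying with respect to 𝒮, i.e. μ(ψ(x, t) ∩ ψ̄(S, t + s)) ≤ c_δ e^{−δs} μ(ψ(x, t)) for all (x, t) ∈ Ω, S ∈ 𝒮 and s ≥ 0; (ii) (Ω, ψ) is d_*-separating, i.e. for every (x, t) ∈ Ω and every M ⊆ X̄ disjoint from ψ̄(x, t), the sets ψ̄(x,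 t + d_*) and ψ̄(M, t + d_*) are disjoint; (iii) F is locally contained in 𝒮 with constants n_* ∈ ℕ and l_* ≥ 0, i.e. for every (x, t) ∈ Ω the set ψ̄(x, t + l_*) ∩ R(t) is contained in a union of at most n_* members of 𝒮. Then for every (x, t) ∈ Ω and every s ≥ 0 one has μ(ψ(x, t + l_* + d_*) ∩ ψ̄(R(t), t + l_* + d_* + s)) ≤ n_* c_δ e^{−δs} μ(ψ(x, t + l_* + d_*)). -/
open Metric Set MeasureTheory

/-- If `(Ω, ψ, μ)` is absolutely `(δ, c_δ)`-decaying with respect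
to `𝒮`, `(Ω, ψ)` is `d_*`-separating, and the nested discrete family `F` is
locally contained in `𝒮` with constants `n_* ∈ ℕ`, `l_* ≥ 0`, then
`μ(ψ(x, t+l_*+d_*) ∩ ψ̄(R(t), t+l_*+d_*+s)) ≤ n_* c_δ e^{−δ s} μ(ψ(x, t+l_*+d_*))`
for every formal ball `(x, t) ∈ Ω` and every `s ≥ 0`. -/
theorem stmt4 {Xbar : Type*} [MetricSpace Xbar] [ProperSpace Xbar]
    [MeasurableSpace Xbar] [BorelSpace Xbar]
    (X : Set Xbar) (hXne : X.Nonempty) (hXcl : IsClosed X)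
    (tstar : EReal)
    (ψ : Xbar → ℝ → Set Xbar)
    (hψ : ∀ (x : Xbar) (t : ℝ), tstar < (t : EReal) →
      IsCompact (ψ x t) ∧ (ψ x t).Nonempty)
    (hψmono : ∀ (x : Xbar) (t s : ℝ), tstar < (t : EReal) → 0 ≤ s →
      ψ x (t + s) ⊆ ψ x t)
    (𝒮 : Set (Set Xbar)) (h𝒮 : 𝒮.Nonempty)
    (μ : Measure Xbar) [IsLocallyFiniteMeasure μ]
    -- relevant sets are Borel
    (hBorel : ∀ S ∈ 𝒮, ∀ t : ℝ, tstar < (t : EReal) →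
      MeasurableSet (⋃ y ∈ S, ψ y t))
    {Λ : Type*} [Countable Λ]
    (R : Λ → Set Xbar) (sz : Λ → ℝ)
    (hsz : ∀ lam : Λ, tstar < (sz lam : EReal))
    (hnested : ∀ lam bet : Λ, sz lam ≤ sz bet → R lam ⊆ R bet)
    (hdiscrete : ∀ t : ℝ, {lam : Λ | sz lam ≤ t}.Finite)
    (δ cδ : ℝ) (hδ : 0 < δ) (hcδ : 0 < cδ)
    -- (i) absolutely (δ, c_δ)-decaying with respect to 𝒮
    (hdecay : ∀ x ∈ X, ∀ t : ℝ, tstar < (t : EReal) → ∀ S ∈ 𝒮, ∀ s : ℝ, 0 ≤ s →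
      μ ((ψ x t ∩ X) ∩ ⋃ y ∈ S, ψ y (t + s)) ≤
        ENNReal.ofReal (cδ * Real.exp (-δ * s)) * μ (ψ x t ∩ X))
    (dstar : ℝ) (hdstar : 0 < dstar)
    -- (ii) d_*-separating
    (hsep : ∀ x ∈ X, ∀ t : ℝ, tstar < (t : EReal) → ∀ M : Set Xbar,
      Disjoint M (ψ x t) →
      Disjoint (ψ x (t + dstar)) (⋃ y ∈ M, ψ y (t + dstar)))
    (nstar : ℕ) (lstar : ℝ) (hlstar : 0 ≤ lstar)
    -- (iii) F is locally contained in 𝒮 with constants n_*, l_*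
    (hloc : ∀ x ∈ X, ∀ t : ℝ, tstar < (t : EReal) →
      ∃ T : Finset (Set Xbar), ↑T ⊆ 𝒮 ∧ T.card ≤ nstar ∧
        ψ x (t + lstar) ∩ (⋃ lam : Λ, ⋃ (_ : sz lam ≤ t), R lam) ⊆ ⋃₀ ↑T) :
    ∀ x ∈ X, ∀ t : ℝ, tstar < (t : EReal) → ∀ s : ℝ, 0 ≤ s →
      μ ((ψ x (t + lstar + dstar) ∩ X) ∩
          ⋃ y ∈ (⋃ lam : Λ, ⋃ (_ : sz lam ≤ t), R lam), ψ y (t + lstar + dstar + s)) ≤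
        ENNReal.ofReal ((nstar : ℝ) * cδ * Real.exp (-δ * s)) *
          μ (ψ x (t + lstar + dstar) ∩ X) := by
  intro x hx t ht s hs
  set t' := t + lstar + dstar with ht'def
  have htl : tstar < ((t + lstar : ℝ) : EReal) := by
    refine lt_of_lt_of_le ht ?_
    exact_mod_cast le_add_of_nonneg_right hlstar
  have ht' : tstar < ((t' : ℝ) : EReal) := by
    refine lt_of_lt_of_le htl ?_
    exact_mod_cast le_add_of_nonneg_right hdstar.le
  obtain ⟨T, hT𝒮, hTcard, hTcover⟩ := hloc x hx t ht
  set Rt : Set Xbar := ⋃ lam : Λ, ⋃ (_ : sz lam ≤ t), R lam with hRt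
  set M : Set Xbar := Rt \ ψ x (t + lstar) with hM
  have hMdisj : Disjoint M (ψ x (t + lstar)) := disjoint_sdiff_left
  have hsep' := hsep x hx (t + lstar) htl M hMdisj
  have key : (ψ x t' ∩ X) ∩ ⋃ y ∈ Rt, ψ y (t' + s) ⊆
      ⋃ S ∈ T, (ψ x t' ∩ X) ∩ ⋃ y ∈ S, ψ y (t' + s) := by
    rintro z ⟨hzA, hzU⟩
    simp only [mem_iUnion, exists_prop] at hzU
    obtain ⟨y, hyR, hzy⟩ := hzU
    have hzy' : z ∈ ψ y t' := hψmono y t' s ht' hs hzy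
    have hy : y ∈ ψ x (t + lstar) := by
      by_contra hy
      exact Set.disjoint_left.mp hsep' hzA.1
        (mem_biUnion (show y ∈ M from ⟨hyR, hy⟩) hzy')
    obtain ⟨S, hST, hyS⟩ := hTcover ⟨hy, hyR⟩
    exact mem_biUnion hST ⟨hzA, mem_biUnion hyS hzy⟩
  calc μ ((ψ x t' ∩ X) ∩ ⋃ y ∈ Rt, ψ y (t' + s))
      ≤ μ (⋃ S ∈ T, (ψ x t' ∩ X) ∩ ⋃ y ∈ S, ψ y (t' + s)) := measure_mono key
    _ ≤ ∑ S ∈ T, μ ((ψ x t' ∩ X) ∩ ⋃ y ∈ S, ψ y (t' + s)) :=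
        measure_biUnion_finset_le T _
    _ ≤ ∑ _S ∈ T, ENNReal.ofReal (cδ * Real.exp (-δ * s)) * μ (ψ x t' ∩ X) :=
        Finset.sum_le_sum fun S hS => hdecay x hx t' ht' S (hT𝒮 hS) s hs
    _ = (T.card : ENNReal) * (ENNReal.ofReal (cδ * Real.exp (-δ * s)) * μ (ψ x t' ∩ X)) := by
        rw [Finset.sum_const, nsmul_eq_mul]
    _ ≤ (nstar : ENNReal) * (ENNReal.ofReal (cδ * Real.exp (-δ * s)) * μ (ψ x t' ∩ X)) := by
        exact mul_le_mul_left (by exact_mod_cast hTcard) _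
    _ = ENNReal.ofReal ((nstar : ℝ) * cδ * Real.exp (-δ * s)) * μ (ψ x t' ∩ X) := by
        have h1 : ENNReal.ofReal ((nstar : ℝ) * cδ * Real.exp (-δ * s)) =
            (nstar : ENNReal) * ENNReal.ofReal (cδ * Real.exp (-δ * s)) := by
          rw [mul_assoc, ENNReal.ofReal_mul (by positivity), ENNReal.ofReal_natCast]
        rw [h1, mul_assoc]
end

section
/- Let X̄ be a proper metric space, X ⊆ X̄ a nonempty closed subset, t_* ∈ ℝ ∪ {−∞}, Ω = X × (t_*, ∞), and let ψ̄ be a monotonic function with induced function ψ. Let F = (Λ, R_λ, s_λ) be a nested and discrete family of resonant sets in X̄, and let μ be a locally finite Borel measure with supp(μ) = X, μ(ψ(x, t)) > 0 for all (x, t) ∈ Ω, and all relevant sets Borel. Let n_* ∈ ℕ, L_* ≥ 0, d_* ≥ 0 and b_* > 2 d_*, and let f : [0, ∞] × ℝ → [0, ∞) be nondecreasing in the first and nonincreasing in the second argument. Assume: (i) (Ω, ψ) is d_*-separating with respect to F, i.e. for every t > t_* and every set Y which is either a singleton {y} with y ∈ X or of the form R(r, b), and every x ∈ X with x ∉ ψ̄(Y,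 t), the sets ψ(x, t + d_*) and ψ̄(Y, t + d_*) are disjoint, and for all x, y ∈ X and t > t_* with x ∈ ψ(y, t + d_*) one has ψ(x, t + d_*) ⊆ ψ(y, t); (ii) (Ω, ψ, μ) is f-decaying with respect to F, i.e. μ(ψ(x, r) ∩ ψ̄(R(r, b), r + s)) ≤ f(b, s) μ(ψ(x, r)) for all (x, r) ∈ Ω, b ≥ 0 and s ∈ ℝ; (iii) f is (d_*, b_*, n_*, L_*)-decaying, i.e. there exists c₀ < 1 with f(n_*(b + L_*) + d_*, b − 2 d_*) ≤ c₀ for all b > b_*. Then (Ω, ψ) is (b_* + 2 d_*, n_*, L_*)-diffuse with respect to F: for every b > b_* + 2 d_* and every (x, r) ∈ Ω there exists x' ∈ X such that ψ(x', r + b) ⊆ ψ(x, r) and ψ(x', r + b) is disjoint from ψ̄(R(r, n_*(b + L_*)), r + b). -/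
/-!
Work at the intermediate time `r + d_*`. By `f`-decay, the points of `ψ(x, r + d_*)` that lie in
`ψ̄(R(r + d_*, n_*(b + L_*) + d_*), r + b - d_*)` carry at most a fraction `c₀ < 1` of its
(positive, finite) measure, so some `x' ∈ ψ(x, r + d_*)` avoids that set. Separation then gives
`ψ(x', r + b) ⊆ ψ(x, r)` and makes `ψ(x', r + b)` disjoint from `ψ̄(R(r + d_*, …), r + b)`, which
contains `ψ̄(R(r, n_*(b + L_*)), r + b)` because the two shells have the same lower end.
-/

open Metric Set MeasureTheory

section ResonantShell

variable {α Λ : Type*}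

/-- The shell `R(r, b) = R(r) \ R(r - b)` of a family of resonant sets. -/
def resonantShell (R : Λ → Set α) (sz : Λ → ℝ) (r b : ℝ) : Set α :=
  (⋃ lam, ⋃ (_ : sz lam ≤ r), R lam) \ ⋃ lam, ⋃ (_ : sz lam ≤ r - b), R lam

theorem resonantShell_subset_resonantShell {R : Λ → Set α} {sz : Λ → ℝ} {r r' b b' : ℝ}
    (hr : r ≤ r') (hb : r' - b' ≤ r - b) :
    resonantShell R sz r b ⊆ resonantShell R sz r' b' := by
  refine sdiff_subset_sdiff ?_ ?_ <;>
    exact iUnion_mono fun lam => iUnion_subset fun h => subset_iUnion_of_subset (by linarith) le_rfl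

end ResonantShell

theorem MeasureTheory.Measure.nonempty_diff_of_measure_inter_le_mul {α : Type*}
    [MeasurableSpace α] {μ : Measure α} {S T : Set α} {c : ENNReal} (hc : c < 1)
    (hS₀ : μ S ≠ 0) (hS : μ S ≠ ⊤) (h : μ (S ∩ T) ≤ c * μ S) : (S \ T).Nonempty := by
  by_contra hST
  rw [not_nonempty_iff_eq_empty, sdiff_eq_empty, ← inter_eq_left] at hST
  rw [hST] at h
  exact (h.trans_lt (by simpa using ENNReal.mul_lt_mul_left hS₀ hS hc)).false

theorem stmt5_general {Xbar : Type*} [MetricSpace Xbar] [MeasurableSpace Xbar]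
    (X : Set Xbar) (tstar : EReal)
    (ψ : Xbar → ℝ → Set Xbar)
    (hψ : ∀ (x : Xbar) (t : ℝ), tstar < (t : EReal) →
      IsCompact (ψ x t) ∧ (ψ x t).Nonempty)
    (hψmono : ∀ (x : Xbar) (t s : ℝ), tstar < (t : EReal) → 0 ≤ s →
      ψ x (t + s) ⊆ ψ x t)
    {Λ : Type*} (R : Λ → Set Xbar) (sz : Λ → ℝ)
    (μ : Measure Xbar) [IsLocallyFiniteMeasure μ]
    -- μ has support X and gives positive measure to the formal balls
    (hpos : ∀ x ∈ X, ∀ t : ℝ, tstar < (t : EReal) → 0 < μ (ψ x t ∩ X))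
    (nstar : ℕ) (Lstar dstar bstar : ℝ)
    (hLstar : 0 ≤ Lstar) (hdstar : 0 ≤ dstar) (hbstar : 2 * dstar < bstar)
    (f : ℝ → ℝ → ℝ)
    -- (i) (Ω, ψ) is d_*-separating with respect to F
    (hsepY : ∀ Y : Set Xbar,
      ((∃ y ∈ X, Y = {y}) ∨ (∃ r b : ℝ,
        Y = (⋃ lam : Λ, ⋃ (_ : sz lam ≤ r), R lam) \
              ⋃ lam : Λ, ⋃ (_ : sz lam ≤ r - b), R lam)) →
      ∀ t : ℝ, tstar < (t : EReal) → ∀ x ∈ X, x ∉ (⋃ y ∈ Y, ψ y t) →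
        Disjoint (ψ x (t + dstar) ∩ X) (⋃ y ∈ Y, ψ y (t + dstar)))
    (hsep2 : ∀ x ∈ X, ∀ y ∈ X, ∀ t : ℝ, tstar < (t : EReal) →
      x ∈ ψ y (t + dstar) ∩ X → ψ x (t + dstar) ∩ X ⊆ ψ y t ∩ X)
    -- (ii) (Ω, ψ, μ) is f-decaying with respect to F
    (hdecay : ∀ x ∈ X, ∀ r : ℝ, tstar < (r : EReal) → ∀ b : ℝ, 0 ≤ b → ∀ s : ℝ,
      μ ((ψ x r ∩ X) ∩
          ⋃ y ∈ ((⋃ lam : Λ, ⋃ (_ : sz lam ≤ r), R lam) \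
                  ⋃ lam : Λ, ⋃ (_ : sz lam ≤ r - b), R lam),
            ψ y (r + s)) ≤ ENNReal.ofReal (f b s) * μ (ψ x r ∩ X))
    -- (iii) f is (d_*, b_*, n_*, L_*)-decaying
    (c₀ : ℝ) (hc₀ : c₀ < 1)
    (hfdec : ∀ b : ℝ, bstar < b →
      f ((nstar : ℝ) * (b + Lstar) + dstar) (b - 2 * dstar) ≤ c₀) :
    -- conclusion: (b_* + 2d_*, n_*, L_*)-diffuse with respect to F
    ∀ b : ℝ, bstar + 2 * dstar < b → ∀ x ∈ X, ∀ r : ℝ, tstar < (r : EReal) →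
      ∃ x' ∈ X, ψ x' (r + b) ∩ X ⊆ ψ x r ∩ X ∧
        Disjoint (ψ x' (r + b) ∩ X)
          (⋃ y ∈ ((⋃ lam : Λ, ⋃ (_ : sz lam ≤ r), R lam) \
                   ⋃ lam : Λ, ⋃ (_ : sz lam ≤ r - (nstar : ℝ) * (b + Lstar)), R lam),
            ψ y (r + b)) := by
  intro b hb x hx r hr
  have hr_add : ∀ s : ℝ, 0 ≤ s → tstar < ((r + s : ℝ) : EReal) := fun s hs =>
    hr.trans_le (EReal.coe_le_coe_iff.mpr (by linarith))
  have hd := hr_add dstar hdstar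
  set b' : ℝ := (nstar : ℝ) * (b + Lstar) + dstar
  have hb' : 0 ≤ b' := by
    have : 0 ≤ b + Lstar := by linarith
    positivity
  set S := ψ x (r + dstar) ∩ X
  have hS : μ S ≠ ⊤ :=
    (measure_mono inter_subset_left).trans_lt ((hψ x _ hd).1.measure_lt_top) |>.ne
  have hdecayS : μ (S ∩ ⋃ y ∈ resonantShell R sz (r + dstar) b', ψ y (r + b - dstar))
      ≤ ENNReal.ofReal c₀ * μ S := by
    have := hdecay x hx _ hd b' hb' (b - 2 * dstar)
    rw [show r + dstar + (b - 2 * dstar) = r + b - dstar by ring] at this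
    exact this.trans (by gcongr; exact hfdec b (by linarith))
  obtain ⟨x', ⟨hx'ψ, hx'X⟩, hx'Y⟩ := Measure.nonempty_diff_of_measure_inter_le_mul
    (ENNReal.ofReal_lt_one.mpr hc₀) (hpos x hx _ hd).ne' hS hdecayS
  refine ⟨x', hx'X, ?_, ?_⟩
  · have hψx' : ψ x' (r + b) ⊆ ψ x' (r + dstar) := by
      simpa using hψmono x' (r + dstar) (b - dstar) hd (by linarith)
    exact (inter_subset_inter_left X hψx').trans (hsep2 x' hx'X x hx r hr ⟨hx'ψ, hx'X⟩)
  · have hdisj := hsepY _ (Or.inr ⟨r + dstar, b', rfl⟩) (r + b - dstar)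
      (by simpa [add_sub_assoc] using hr_add (b - dstar) (by linarith)) x' hx'X hx'Y
    rw [sub_add_cancel] at hdisj
    refine hdisj.mono_right (biUnion_subset_biUnion_left ?_)
    exact resonantShell_subset_resonantShell (by linarith) (by linarith)

/-- If `(Ω, ψ)` is `d_*`-separating with respect to the nested,
discrete family `F`, `(Ω, ψ, μ)` is `f`-decaying with respect to `F`, and `f` is
`(d_*, b_*, n_*, L_*)`-decaying, then `(Ω, ψ)` is `(b_* + 2d_*, n_*, L_*)`-diffuse
with respect to `F`. -/
theorem stmt5 {Xbar : Type*} [MetricSpace Xbar] [ProperSpace Xbar]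
    [MeasurableSpace Xbar] [BorelSpace Xbar]
    (X : Set Xbar) (hXne : X.Nonempty) (hXcl : IsClosed X)
    (tstar : EReal)
    (ψ : Xbar → ℝ → Set Xbar)
    (hψ : ∀ (x : Xbar) (t : ℝ), tstar < (t : EReal) →
      IsCompact (ψ x t) ∧ (ψ x t).Nonempty)
    (hψmono : ∀ (x : Xbar) (t s : ℝ), tstar < (t : EReal) → 0 ≤ s →
      ψ x (t + s) ⊆ ψ x t)
    {Λ : Type*} [Countable Λ]
    (R : Λ → Set Xbar) (sz : Λ → ℝ)
    (hsz : ∀ lam : Λ, tstar < (sz lam : EReal))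
    (hnested : ∀ lam bet : Λ, sz lam ≤ sz bet → R lam ⊆ R bet)
    (hdiscrete : ∀ t : ℝ, {lam : Λ | sz lam ≤ t}.Finite)
    (μ : Measure Xbar) [IsLocallyFiniteMeasure μ]
    -- μ has support X and gives positive measure to the formal balls
    (hsupp : ∀ x : Xbar, x ∈ X ↔ ∀ ε : ℝ, 0 < ε → 0 < μ (ball x ε))
    (hpos : ∀ x ∈ X, ∀ t : ℝ, tstar < (t : EReal) → 0 < μ (ψ x t ∩ X))
    (nstar : ℕ) (Lstar dstar bstar : ℝ)
    (hLstar : 0 ≤ Lstar) (hdstar : 0 ≤ dstar) (hbstar : 2 * dstar < bstar)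
    (f : ℝ → ℝ → ℝ)
    (hf0 : ∀ b s : ℝ, 0 ≤ b → 0 ≤ f b s)
    (hfmono : ∀ b₁ b₂ s : ℝ, 0 ≤ b₁ → b₁ ≤ b₂ → f b₁ s ≤ f b₂ s)
    (hfanti : ∀ b s₁ s₂ : ℝ, 0 ≤ b → s₁ ≤ s₂ → f b s₂ ≤ f b s₁)
    -- (i) (Ω, ψ) is d_*-separating with respect to F
    (hsepY : ∀ Y : Set Xbar,
      ((∃ y ∈ X, Y = {y}) ∨ (∃ r b : ℝ,
        Y = (⋃ lam : Λ, ⋃ (_ : sz lam ≤ r), R lam) \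
              ⋃ lam : Λ, ⋃ (_ : sz lam ≤ r - b), R lam)) →
      ∀ t : ℝ, tstar < (t : EReal) → ∀ x ∈ X, x ∉ (⋃ y ∈ Y, ψ y t) →
        Disjoint (ψ x (t + dstar) ∩ X) (⋃ y ∈ Y, ψ y (t + dstar)))
    (hsep2 : ∀ x ∈ X, ∀ y ∈ X, ∀ t : ℝ, tstar < (t : EReal) →
      x ∈ ψ y (t + dstar) ∩ X → ψ x (t + dstar) ∩ X ⊆ ψ y t ∩ X)
    -- (ii) (Ω, ψ, μ) is f-decaying with respect to F
    (hdecay : ∀ x ∈ X, ∀ r : ℝ, tstar < (r : EReal) → ∀ b : ℝ, 0 ≤ b → ∀ s : ℝ,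
      μ ((ψ x r ∩ X) ∩
          ⋃ y ∈ ((⋃ lam : Λ, ⋃ (_ : sz lam ≤ r), R lam) \
                  ⋃ lam : Λ, ⋃ (_ : sz lam ≤ r - b), R lam),
            ψ y (r + s)) ≤ ENNReal.ofReal (f b s) * μ (ψ x r ∩ X))
    -- (iii) f is (d_*, b_*, n_*, L_*)-decaying
    (c₀ : ℝ) (hc₀ : c₀ < 1)
    (hfdec : ∀ b : ℝ, bstar < b →
      f ((nstar : ℝ) * (b + Lstar) + dstar) (b - 2 * dstar) ≤ c₀) :
    -- conclusion: (b_* + 2d_*, n_*, L_*)-diffuse with respect to F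
    ∀ b : ℝ, bstar + 2 * dstar < b → ∀ x ∈ X, ∀ r : ℝ, tstar < (r : EReal) →
      ∃ x' ∈ X, ψ x' (r + b) ∩ X ⊆ ψ x r ∩ X ∧
        Disjoint (ψ x' (r + b) ∩ X)
          (⋃ y ∈ ((⋃ lam : Λ, ⋃ (_ : sz lam ≤ r), R lam) \
                   ⋃ lam : Λ, ⋃ (_ : sz lam ≤ r - (nstar : ℝ) * (b + Lstar)), R lam),
            ψ y (r + b)) :=
  stmt5_general X tstar ψ hψ hψmono R sz μ hpos nstar Lstar dstar bstar hLstar hdstar hbstar f hsepY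
    hsep2 hdecay c₀ hc₀ hfdec
end

section
/- (Simplex Lemma) Let n ≥ 1 and let k ≥ 2 be a natural number. If D ⊆ ℝⁿ is a convex set of Lebesgue measure vol(D) < 1/(n! · k^{n+1}), then there exists an affine hyperplane L ⊆ ℝⁿ such that R_k ∩ D ⊆ L, where R_k = { p/q : p ∈ ℤⁿ, q ∈ ℕ, 0 < q < k } is the set of rational vectors with denominator less than k. -/
open MeasureTheory Set Matrix ENNReal Pointwise

lemma orderSimplex_vol (n : ℕ) : ((n.factorial : ℝ≥0∞))⁻¹ ≤
    volume {x : Fin n → ℝ | (∀ i j : Fin n, i ≤ j → x j ≤ x i) ∧ ∀ i, x i ∈ Icc (0:ℝ) 1} := by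
  set T := {x : Fin n → ℝ | (∀ i j : Fin n, i ≤ j → x j ≤ x i) ∧ ∀ i, x i ∈ Icc (0:ℝ) 1} with hT
  have hTc : IsClosed T := by
    rw [hT, setOf_and]
    apply IsClosed.inter
    · have : {x : Fin n → ℝ | ∀ i j : Fin n, i ≤ j → x j ≤ x i}
          = ⋂ (i) (j) (_ : i ≤ j), {x : Fin n → ℝ | x j ≤ x i} := by
        ext x; simp [Set.mem_iInter]
      rw [this]
      exact isClosed_iInter fun i => isClosed_iInter fun j => isClosed_iInter fun _ =>
        isClosed_le (continuous_apply j) (continuous_apply i)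
    · have : {x : Fin n → ℝ | ∀ i, x i ∈ Icc (0:ℝ) 1}
          = ⋂ i, (fun x : Fin n → ℝ => x i) ⁻¹' Icc (0:ℝ) 1 := by
        ext x; simp [Set.mem_iInter]
      rw [this]
      exact isClosed_iInter fun i => isClosed_Icc.preimage (continuous_apply i)
  have hTm : MeasurableSet T := hTc.measurableSet
  have hcover : (Set.univ.pi fun _ : Fin n => Icc (0:ℝ) 1) ⊆
      ⋃ σ : Equiv.Perm (Fin n), (fun x : Fin n → ℝ => x ∘ σ) ⁻¹' T := by
    intro x hx
    simp only [Set.mem_iUnion, Set.mem_preimage]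
    obtain ⟨σ, hσ⟩ : ∃ σ : Equiv.Perm (Fin n), Monotone ((-x) ∘ σ) :=
      ⟨Tuple.sort (-x), Tuple.monotone_sort (-x)⟩
    refine ⟨σ, fun i j hij => ?_, fun i => hx (σ i) trivial⟩
    have := hσ hij
    simp only [Function.comp_apply, Pi.neg_apply, neg_le_neg_iff] at this
    exact this
  have hperm : ∀ σ : Equiv.Perm (Fin n),
      volume ((fun x : Fin n → ℝ => x ∘ σ) ⁻¹' T) = volume T := by
    intro σ
    have h1 : MeasurePreserving (fun x : Fin n → ℝ => x ∘ σ) volume volume := by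
      have := MeasureTheory.volume_measurePreserving_piCongrLeft (fun _ : Fin n => ℝ) σ.symm
      convert this using 1
      ext x i
      simp [MeasurableEquiv.piCongrLeft, Equiv.piCongrLeft, Equiv.piCongrLeft']
    exact h1.measure_preimage hTm.nullMeasurableSet
  have hcube : volume (Set.univ.pi fun _ : Fin n => Icc (0:ℝ) 1) = 1 := by
    rw [show (Set.univ.pi fun _ : Fin n => Icc (0:ℝ) 1) = Icc (fun _ => 0) (fun _ => 1) by
      ext x; simp [Set.mem_pi, Pi.le_def, Set.mem_Icc, forall_and]]
    rw [Real.volume_Icc_pi]; simp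
  have hsum : (1 : ℝ≥0∞) ≤ (n.factorial : ℝ≥0∞) * volume T := by
    calc (1:ℝ≥0∞) = volume (Set.univ.pi fun _ : Fin n => Icc (0:ℝ) 1) := hcube.symm
    _ ≤ volume (⋃ σ : Equiv.Perm (Fin n), (fun x : Fin n → ℝ => x ∘ σ) ⁻¹' T) :=
        measure_mono hcover
    _ ≤ ∑ σ : Equiv.Perm (Fin n), volume ((fun x : Fin n → ℝ => x ∘ σ) ⁻¹' T) :=
        measure_iUnion_fintype_le _ _
    _ = (n.factorial : ℝ≥0∞) * volume T := by
        simp only [hperm, Finset.sum_const, Finset.card_univ, Fintype.card_perm,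
          Fintype.card_fin, nsmul_eq_mul]
  rw [ENNReal.inv_le_iff_le_mul] <;> simp_all [Nat.factorial_ne_zero]

lemma detA_eq_detW (n : ℕ) (y : Fin (n+1) → Fin n → ℝ) :
    Matrix.det (Matrix.of fun (i j : Fin (n+1)) => (Fin.cons (1:ℝ) (y i) : Fin (n+1) → ℝ) j)
      = Matrix.det (Matrix.of fun (i j : Fin n) => y i.succ j - y i.castSucc j) := by
  set B : Matrix (Fin (n+1)) (Fin (n+1)) ℝ :=
    Matrix.of (Fin.cases (Fin.cons 1 (y 0))
      (fun i => Fin.cons 0 (fun j => y i.succ j - y i.castSucc j))) with hB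
  have h1 : Matrix.det (Matrix.of fun (i j : Fin (n+1)) =>
      (Fin.cons (1:ℝ) (y i) : Fin (n+1) → ℝ) j) = Matrix.det B := by
    apply Matrix.det_eq_of_forall_row_eq_smul_add_pred (fun _ => 1)
    · intro j; simp [hB]
    · intro i j
      refine Fin.cases ?_ (fun j' => ?_) j <;> simp [hB]
  rw [h1, Matrix.det_succ_column_zero]
  rw [Fin.sum_univ_succ]
  have hB0 : B 0 0 = 1 := by simp [hB]
  have hBs : ∀ i : Fin n, B i.succ 0 = 0 := by intro i; simp [hB]
  simp only [hB0, hBs, mul_zero, zero_mul, mul_one, Finset.sum_const_zero, add_zero,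
    Fin.val_zero, pow_zero, one_mul]
  have hsub : B.submatrix (Fin.succAbove 0) Fin.succ
      = Matrix.of fun (i j : Fin n) => y i.succ j - y i.castSucc j := by
    ext i j
    simp [hB, Fin.succAbove_zero]
  rw [hsub]

lemma det_abs_ge (n : ℕ) (p : Fin (n+1) → Fin n → ℤ) (q : Fin (n+1) → ℕ)
    (hq : ∀ i, 0 < q i)
    (y : Fin (n+1) → Fin n → ℝ) (hy : ∀ i j, y i j = (p i j : ℝ) / (q i : ℝ))
    (hA : Matrix.det (Matrix.of fun (i j : Fin (n+1)) =>
      (Fin.cons (1:ℝ) (y i) : Fin (n+1) → ℝ) j) ≠ 0) :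
    (1 : ℝ) / (∏ i, (q i : ℝ)) ≤ |Matrix.det (Matrix.of fun (i j : Fin (n+1)) =>
      (Fin.cons (1:ℝ) (y i) : Fin (n+1) → ℝ) j)| := by
  set A : Matrix (Fin (n+1)) (Fin (n+1)) ℝ :=
    Matrix.of fun (i j : Fin (n+1)) => (Fin.cons (1:ℝ) (y i) : Fin (n+1) → ℝ) j with hAdef
  set Bint : Matrix (Fin (n+1)) (Fin (n+1)) ℤ :=
    Matrix.of fun (i j : Fin (n+1)) => (Fin.cons (q i : ℤ) (p i) : Fin (n+1) → ℤ) j with hBdef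
  have hqR : ∀ i, (q i : ℝ) ≠ 0 := fun i => Nat.cast_ne_zero.2 (hq i).ne'
  have hmap : Bint.map (Int.cast : ℤ → ℝ) = Matrix.of fun i j => (q i : ℝ) * A i j := by
    ext i j
    refine Fin.cases ?_ (fun j' => ?_) j <;>
      simp [hBdef, hAdef, hy, mul_div_cancel₀, hqR i]
  have hdet : ((Bint.det : ℤ) : ℝ) = (∏ i, (q i : ℝ)) * A.det := by
    rw [← Matrix.det_mul_column]
    rw [show ((Bint.det : ℤ) : ℝ) = (Bint.map (Int.cast : ℤ → ℝ)).det from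
      (RingHom.map_det (Int.castRingHom ℝ) Bint)]
    rw [hmap]
  have hprodpos : (0:ℝ) < ∏ i, (q i : ℝ) :=
    Finset.prod_pos fun i _ => Nat.cast_pos.2 (hq i)
  have hBne : Bint.det ≠ 0 := by
    intro h
    rw [h] at hdet
    simp only [Int.cast_zero] at hdet
    rcases mul_eq_zero.1 hdet.symm with h1 | h2
    · exact hprodpos.ne' h1
    · exact hA h2
  have h1le : (1:ℝ) ≤ |((Bint.det : ℤ) : ℝ)| := by
    rw [← Int.cast_abs]
    exact_mod_cast Int.one_le_abs (by exact_mod_cast hBne)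
  rw [div_le_iff₀ hprodpos] at *
  calc (1:ℝ) ≤ |((Bint.det : ℤ) : ℝ)| := h1le
  _ = |A.det| * ∏ i, (q i : ℝ) := by
      rw [hdet, abs_mul, abs_of_pos hprodpos, mul_comm]

lemma simplex_mem (n : ℕ) (y : Fin (n+1) → Fin n → ℝ) (D : Set (Fin n → ℝ))
    (hD : Convex ℝ D) (hyD : ∀ i, y i ∈ D) (x : Fin n → ℝ)
    (hmono : ∀ i j : Fin n, i ≤ j → x j ≤ x i) (h01 : ∀ i, x i ∈ Icc (0:ℝ) 1) :
    (y 0 + ∑ i : Fin n, x i • (y i.succ - y i.castSucc)) ∈ D := by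
  classical
  set x' : Fin (n+1) → ℝ := Fin.snoc x 0 with hx'
  have hx'c : ∀ i : Fin n, x' i.castSucc = x i := fun i => Fin.snoc_castSucc _ _ _
  have hx'l : x' (Fin.last n) = 0 := Fin.snoc_last _ _
  have hx'nonneg : ∀ j, 0 ≤ x' j := by
    intro j
    rcases Fin.eq_castSucc_or_eq_last j with ⟨i, rfl⟩ | rfl
    · rw [hx'c]; exact (h01 i).1
    · rw [hx'l]
  have hx'le1 : ∀ j, x' j ≤ 1 := by
    intro j
    rcases Fin.eq_castSucc_or_eq_last j with ⟨i, rfl⟩ | rfl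
    · rw [hx'c]; exact (h01 i).2
    · rw [hx'l]; norm_num
  have hx'mono : ∀ i j : Fin (n+1), i ≤ j → x' j ≤ x' i := by
    intro i j hij
    rcases Fin.eq_castSucc_or_eq_last j with ⟨j', rfl⟩ | rfl
    · rcases Fin.eq_castSucc_or_eq_last i with ⟨i', rfl⟩ | rfl
      · rw [hx'c, hx'c]
        exact hmono _ _ (by exact_mod_cast hij)
      · have h1 : (n : ℕ) ≤ (j' : ℕ) := by
          simpa [Fin.le_def] using hij
        exact absurd h1 (not_le.2 j'.2)
    · rw [hx'l]; exact hx'nonneg i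
  set t : Fin (n+1) → ℝ :=
    Fin.cons (1 - x' 0) (fun i => x' i.castSucc - x' i.succ) with ht
  have htnonneg : ∀ j, 0 ≤ t j := by
    refine Fin.cases ?_ (fun i => ?_)
    · simp only [ht, Fin.cons_zero, sub_nonneg]; exact hx'le1 0
    · simp only [ht, Fin.cons_succ, sub_nonneg]
      exact hx'mono _ _ (Fin.castSucc_le_succ i)
  set f : ℕ → ℝ := fun m => if h : m < n + 1 then x' ⟨m, h⟩ else 0 with hf
  have htsum : ∑ j, t j = 1 := by
    rw [Fin.sum_univ_succ]
    simp only [ht, Fin.cons_zero, Fin.cons_succ]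
    have hterm : ∀ i : Fin n, x' i.castSucc - x' i.succ = f i - f (i + 1) := by
      intro i
      have h1 : (i : ℕ) < n + 1 := Nat.lt_succ_of_lt i.2
      have h2 : (i : ℕ) + 1 < n + 1 := Nat.succ_lt_succ i.2
      simp only [hf, dif_pos h1, dif_pos h2]
      congr 1
    rw [Finset.sum_congr rfl (fun i _ => hterm i),
      Fin.sum_univ_eq_sum_range (fun m => f m - f (m+1)), Finset.sum_range_sub' f n]
    have hf0 : f 0 = x' 0 := by simp [hf]
    have hfn : f n = 0 := by
      simp only [hf, dif_pos (Nat.lt_succ_self n)]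
      exact hx'l ▸ rfl
    rw [hf0, hfn]
    ring
  have hpt : y 0 + ∑ i : Fin n, x i • (y i.succ - y i.castSucc) = ∑ j, t j • y j := by
    have e1 : ∑ j : Fin (n+1), x' j • y j
        = x' 0 • y 0 + ∑ i : Fin n, x' i.succ • y i.succ := Fin.sum_univ_succ _
    have e2 : ∑ j : Fin (n+1), x' j • y j
        = ∑ i : Fin n, x' i.castSucc • y i.castSucc := by
      rw [Fin.sum_univ_castSucc]
      simp [hx'l]
    rw [Fin.sum_univ_succ]
    simp only [ht, Fin.cons_zero, Fin.cons_succ, sub_smul, smul_sub, one_smul]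
    rw [Finset.sum_sub_distrib, Finset.sum_sub_distrib]
    have hxc : ∀ i : Fin n, x i • y i.succ = x' i.castSucc • y i.succ := by
      intro i; rw [hx'c]
    have hxc2 : ∀ i : Fin n, x i • y i.castSucc = x' i.castSucc • y i.castSucc := by
      intro i; rw [hx'c]
    rw [Finset.sum_congr rfl (fun i _ => hxc i), Finset.sum_congr rfl (fun i _ => hxc2 i), ← e2]
    have e1' : ∑ i : Fin n, x' i.succ • y i.succ
        = (∑ j : Fin (n+1), x' j • y j) - x' 0 • y 0 := by
      rw [e1]; abel
    rw [e1']
    abel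
  rw [hpt]
  exact hD.sum_mem (fun j _ => htnonneg j) htsum (fun j _ => hyD j)

/-- **Simplex Lemma.** If `D ⊆ ℝⁿ` is a convex set of Lebesgue
measure less than `1/(n! kⁿ⁺¹)`, then the rational vectors with denominator
`0 < q < k` lying in `D` are contained in an affine hyperplane
`L = {x | ∑ i, a i * x i = c}` (with `a ≠ 0`). -/
theorem stmt8 (n : ℕ) (hn : 1 ≤ n) (k : ℕ) (hk : 2 ≤ k)
    (D : Set (Fin n → ℝ)) (hD : Convex ℝ D)
    (hvol : volume D < ENNReal.ofReal (1 / ((n.factorial : ℝ) * (k : ℝ) ^ (n + 1)))) :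
    ∃ (a : Fin n → ℝ) (c : ℝ), a ≠ 0 ∧
      ∀ x : Fin n → ℝ,
        (∃ (p : Fin n → ℤ) (q : ℕ), 0 < q ∧ q < k ∧ ∀ i, x i = (p i : ℝ) / (q : ℝ)) →
        x ∈ D → ∑ i, a i * x i = c := by
  classical
  set S : Set (Fin n → ℝ) :=
    {x | (∃ (p : Fin n → ℤ) (q : ℕ), 0 < q ∧ q < k ∧ ∀ i, x i = (p i : ℝ) / (q : ℝ)) ∧ x ∈ D}
    with hSdef
  suffices h : ∃ (a : Fin n → ℝ) (c : ℝ), a ≠ 0 ∧ ∀ x ∈ S, ∑ i, a i * x i = c by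
    obtain ⟨a, c, ha, hac⟩ := h
    exact ⟨a, c, ha, fun x h1 h2 => hac x ⟨h1, h2⟩⟩
  by_cases hspan : affineSpan ℝ S = ⊤
  · -- impossible: extract an (n+1)-point affinely independent family in S
    exfalso
    obtain ⟨t, hts, htspan, htind⟩ := exists_affineIndependent ℝ (Fin n → ℝ) S
    rw [hspan] at htspan
    have htfin : t.Finite := finite_set_of_fin_dim_affineIndependent ℝ htind
    haveI := htfin.fintype
    have hcard : Fintype.card t = n + 1 := by
      have := (htind.affineSpan_eq_top_iff_card_eq_finrank_add_one).1
        (by rwa [Subtype.range_coe])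
      rwa [Module.finrank_fintype_fun_eq_card, Fintype.card_fin] at this
    obtain ⟨e⟩ : Nonempty (Fin (n+1) ≃ t) := by
      rw [← Fintype.card_eq, hcard, Fintype.card_fin]
    set y : Fin (n+1) → Fin n → ℝ := fun j => ((e j : t) : Fin n → ℝ) with hydef
    have hyind : AffineIndependent ℝ y := htind.comp_embedding e.toEmbedding
    have hyS : ∀ j, y j ∈ S := fun j => hts (e j).2
    choose p q hq hqk hy using fun j => (hyS j).1
    have hyD : ∀ j, y j ∈ D := fun j => (hyS j).2
    -- the determinant is nonzero
    set A : Matrix (Fin (n+1)) (Fin (n+1)) ℝ :=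
      Matrix.of fun (i j : Fin (n+1)) => (Fin.cons (1:ℝ) (y i) : Fin (n+1) → ℝ) j with hA
    have hAne : A.det ≠ 0 := by
      intro hdet0
      obtain ⟨v, hv0, hv⟩ := (Matrix.exists_vecMul_eq_zero_iff).2 hdet0
      have hsum0 : ∑ i, v i = 0 := by
        have := congr_fun hv 0
        simpa [Matrix.vecMul, dotProduct, hA] using this
      have hcomb : ∑ i, v i • y i = 0 := by
        funext j
        have := congr_fun hv j.succ
        simpa [Matrix.vecMul, dotProduct, hA, Finset.sum_apply] using this
      have := affineIndependent_iff.1 hyind Finset.univ v (by simpa using hsum0)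
        (by simpa using hcomb)
      exact hv0 (funext fun i => this i (Finset.mem_univ i))
    -- lower bound on |det|
    have hdet_ge : (1 : ℝ) / (k : ℝ) ^ (n+1) ≤ |A.det| := by
      have h1 := det_abs_ge n p q hq y hy hAne
      refine le_trans ?_ h1
      apply div_le_div_of_nonneg_left (by norm_num) ?_ ?_
      · exact Finset.prod_pos fun i _ => Nat.cast_pos.2 (hq i)
      · calc (∏ i, (q i : ℝ)) ≤ ∏ i : Fin (n+1), (k : ℝ) := by
              apply Finset.prod_le_prod
              · intro i _; positivity
              · intro i _; exact_mod_cast (hqk i).le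
        _ = (k : ℝ) ^ (n+1) := by simp
    -- the simplex volume lower bound
    set T := {x : Fin n → ℝ | (∀ i j : Fin n, i ≤ j → x j ≤ x i) ∧ ∀ i, x i ∈ Icc (0:ℝ) 1}
      with hT
    set W : Matrix (Fin n) (Fin n) ℝ :=
      Matrix.of fun (i j : Fin n) => y i.succ j - y i.castSucc j with hW
    have hdetW : W.det = A.det := (detA_eq_detW n y).symm
    set L : (Fin n → ℝ) →ₗ[ℝ] (Fin n → ℝ) := Matrix.toLin' Wᵀ with hL
    have hLx : ∀ x : Fin n → ℝ, L x = ∑ i : Fin n, x i • (y i.succ - y i.castSucc) := by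
      intro x
      funext r
      simp only [hL, Matrix.toLin'_apply, Matrix.mulVec, dotProduct,
        Matrix.transpose_apply, Finset.sum_apply, Pi.smul_apply, Pi.sub_apply, smul_eq_mul, hW,
        Matrix.of_apply]
      exact Finset.sum_congr rfl fun i _ => by ring
    have himg : (fun z => y 0 + z) '' (L '' T) ⊆ D := by
      rintro _ ⟨_, ⟨x, hxT, rfl⟩, rfl⟩
      rw [hLx x]
      exact simplex_mem n y D hD hyD x hxT.1 hxT.2
    have hvol_img : volume ((fun z => y 0 + z) '' (L '' T))
        = ENNReal.ofReal |A.det| * volume T := by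
      have h1 : (fun z : Fin n → ℝ => y 0 + z) '' (⇑L '' T) = (y 0) +ᵥ (⇑L '' T) := by
        rw [← Set.image_vadd]; rfl
      rw [h1, measure_vadd, Measure.addHaar_image_linearMap]
      congr 2
      rw [hL, LinearMap.det_toLin', Matrix.det_transpose, hdetW]
    have hTvol : ((n.factorial : ℝ≥0∞))⁻¹ ≤ volume T := orderSimplex_vol n
    have hfinal : ENNReal.ofReal (1 / ((n.factorial : ℝ) * (k : ℝ) ^ (n + 1))) ≤ volume D := by
      calc ENNReal.ofReal (1 / ((n.factorial : ℝ) * (k : ℝ) ^ (n + 1)))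
          ≤ ENNReal.ofReal (|A.det| * (n.factorial : ℝ)⁻¹) := by
            apply ENNReal.ofReal_le_ofReal
            rw [div_eq_mul_inv, one_mul, mul_inv]
            rw [mul_comm ((n.factorial : ℝ))⁻¹]
            apply mul_le_mul_of_nonneg_right
            · rw [← one_div]
              exact hdet_ge
            · positivity
      _ = ENNReal.ofReal |A.det| * ENNReal.ofReal ((n.factorial : ℝ))⁻¹ :=
            ENNReal.ofReal_mul (abs_nonneg _)
      _ = ENNReal.ofReal |A.det| * ((n.factorial : ℝ≥0∞))⁻¹ := by
            congr 1
            rw [ENNReal.ofReal_inv_of_pos (by positivity), ENNReal.ofReal_natCast]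
      _ ≤ ENNReal.ofReal |A.det| * volume T := by
            exact mul_le_mul_right hTvol _
      _ = volume ((fun z => y 0 + z) '' (L '' T)) := hvol_img.symm
      _ ≤ volume D := measure_mono himg
    exact absurd (lt_of_lt_of_le hvol hfinal) (lt_irrefl _)
  · -- hyperplane case
    rcases eq_empty_or_nonempty S with hS | ⟨x0, hx0⟩
    · refine ⟨Pi.single ⟨0, hn⟩ 1, 0, ?_, ?_⟩
      · intro h
        have := congr_fun h ⟨0, hn⟩
        simp at this
      · intro x hx
        rw [hS] at hx
        exact absurd hx (notMem_empty x)
    · have hvs : vectorSpan ℝ S < ⊤ := by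
        rcases lt_or_eq_of_le (le_top : vectorSpan ℝ S ≤ ⊤) with h | h
        · exact h
        · exact absurd
            ((AffineSubspace.affineSpan_eq_top_iff_vectorSpan_eq_top_of_nonempty ℝ _ _
              ⟨x0, hx0⟩).2 h) hspan
      obtain ⟨f, hf0, hker⟩ := Submodule.exists_le_ker_of_lt_top _ hvs
      refine ⟨fun i => f (fun j => if i = j then 1 else 0), f x0, ?_, ?_⟩
      · intro h
        apply hf0
        refine LinearMap.ext fun x => ?_
        rw [LinearMap.pi_apply_eq_sum_univ f x]
        have : ∀ i, f (fun j => if i = j then 1 else 0) = 0 := fun i => congr_fun h i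
        simp [this]
      · intro x hx
        have hmem : x - x0 ∈ vectorSpan ℝ S := by
          have := vsub_mem_vectorSpan ℝ hx hx0
          simpa using this
        have hfx : f x = f x0 := by
          have h0 : f (x - x0) = 0 := hker hmem
          rw [map_sub, sub_eq_zero] at h0
          exact h0
        rw [← hfx, LinearMap.pi_apply_eq_sum_univ f x]
        exact Finset.sum_congr rfl fun i _ => by rw [smul_eq_mul, mul_comm]
end

section
/- There exists a constant l̄_* > 0 such that for every integer n ≥ 2 the following holds: if D = B(x₁, r₁) × B(x₂, r₂) ⊆ ℂ² is a product of closed discs with r₁ r₂ < e^{−l̄_*} n^{−3}, then there exists a complex affine line L ⊆ ℂ² with D ∩ R_n ⊆ L, where R_n = { (z₁/q, z₂/q) ∈ ℂ² : z₁, z₂, q ∈ ℤ[i], 0 < |q| < n } and ℤ[i] denotes the ring of Gaussian integers. -/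
open Metric Set

/-!
Take `l̄_* = log 8`. For three points `p, p', w` of `D ∩ R_n` the determinant
`Δ = det(p' - p, w - p)` satisfies `|Δ| ≤ 8 r₁ r₂`, while clearing the denominators
`q, q', q''` makes `Δ q q' q''` a Gaussian integer of modulus `≤ 8 r₁ r₂ n³ < 1`.
Hence it vanishes, so any three points of `D ∩ R_n` are collinear and `D ∩ R_n` lies
on one complex line.
-/

/-- A Gaussian integer, viewed inside `ℂ`. -/
def IsGaussianInt (z : ℂ) : Prop := ∃ a b : ℤ, z = (a : ℂ) + (b : ℂ) * Complex.I

def areaForm {R : Type*} [CommRing R] (u v : R × R) : R := u.1 * v.2 - u.2 * v.1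

theorem exists_line_of_areaForm_eq_zero {K : Type*} [Field K] (s : Set (K × K))
    (h : ∀ p ∈ s, ∀ p' ∈ s, ∀ w ∈ s, areaForm (p' - p) (w - p) = 0) :
    ∃ a b c : K, (a, b) ≠ (0, 0) ∧ ∀ w ∈ s, a * w.1 + b * w.2 = c := by
  rcases s.subsingleton_or_nontrivial with hs | ⟨p, hp, p', hp', hpp'⟩
  · rcases s.eq_empty_or_nonempty with rfl | ⟨p, hp⟩
    · exact ⟨1, 0, 0, by simp, by simp⟩
    · exact ⟨1, 0, p.1, by simp, fun w hw => by simp [hs hw hp]⟩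
  · refine ⟨p'.2 - p.2, p.1 - p'.1, (p'.2 - p.2) * p.1 + (p.1 - p'.1) * p.2, ?_, fun w hw => ?_⟩
    · intro hab
      simp only [Prod.mk.injEq, sub_eq_zero] at hab
      exact hpp' (Prod.ext hab.2 hab.1.symm)
    · have := h p hp p' hp' w hw
      simp only [areaForm, Prod.fst_sub, Prod.snd_sub] at this
      linear_combination -this

theorem norm_sub_le_two_mul_of_mem_closedBall {E : Type*} [SeminormedAddCommGroup E]
    {x a b : E} {r : ℝ} (ha : a ∈ closedBall x r) (hb : b ∈ closedBall x r) :
    ‖a - b‖ ≤ 2 * r := by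
  rw [← dist_eq_norm]
  linarith [dist_triangle_right a b x, mem_closedBall.mp ha, mem_closedBall.mp hb]

theorem norm_areaForm_sub_le {𝕜 : Type*} [SeminormedCommRing 𝕜] {x₁ x₂ : 𝕜} {r₁ r₂ : ℝ}
    {p p' w : 𝕜 × 𝕜} (hp : p ∈ closedBall x₁ r₁ ×ˢ closedBall x₂ r₂)
    (hp' : p' ∈ closedBall x₁ r₁ ×ˢ closedBall x₂ r₂)
    (hw : w ∈ closedBall x₁ r₁ ×ˢ closedBall x₂ r₂) :
    ‖areaForm (p' - p) (w - p)‖ ≤ 8 * (r₁ * r₂) := by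
  have hr₁ : 0 ≤ r₁ := nonempty_closedBall.mp ⟨_, hp.1⟩
  have hr₂ : 0 ≤ r₂ := nonempty_closedBall.mp ⟨_, hp.2⟩
  calc ‖areaForm (p' - p) (w - p)‖
      ≤ ‖p'.1 - p.1‖ * ‖w.2 - p.2‖ + ‖p'.2 - p.2‖ * ‖w.1 - p.1‖ :=
        (norm_sub_le _ _).trans (add_le_add (norm_mul_le _ _) (norm_mul_le _ _))
    _ ≤ (2 * r₁) * (2 * r₂) + (2 * r₂) * (2 * r₁) := by
        gcongr ?_ * ?_ + ?_ * ?_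
        · exact norm_sub_le_two_mul_of_mem_closedBall hp'.1 hp.1
        · exact norm_sub_le_two_mul_of_mem_closedBall hw.2 hp.2
        · exact norm_sub_le_two_mul_of_mem_closedBall hp'.2 hp.2
        · exact norm_sub_le_two_mul_of_mem_closedBall hw.1 hp.1
    _ = 8 * (r₁ * r₂) := by ring

theorem areaForm_sub_mul_mem {R : Type*} [CommRing R] (S : Subring R) {p p' w : R × R}
    {q q' q'' : R} (hp : p.1 * q ∈ S ∧ p.2 * q ∈ S) (hp' : p'.1 * q' ∈ S ∧ p'.2 * q' ∈ S)
    (hw : w.1 * q'' ∈ S ∧ w.2 * q'' ∈ S) (hq : q ∈ S) (hq' : q' ∈ S) (hq'' : q'' ∈ S) :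
    areaForm (p' - p) (w - p) * (q * q' * q'') ∈ S := by
  have key : areaForm (p' - p) (w - p) * (q * q' * q'') =
      (p'.1 * q') * (w.2 * q'') * q - (p'.1 * q') * (p.2 * q) * q''
        - (p.1 * q) * (w.2 * q'') * q' - (p'.2 * q') * (w.1 * q'') * q
        + (p'.2 * q') * (p.1 * q) * q'' + (p.2 * q) * (w.1 * q'') * q' := by
    simp only [areaForm, Prod.fst_sub, Prod.snd_sub]; ring
  obtain ⟨hp₁, hp₂⟩ := hp
  obtain ⟨hp'₁, hp'₂⟩ := hp'
  obtain ⟨hw₁, hw₂⟩ := hw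
  rw [key]
  apply_rules [add_mem, sub_mem, mul_mem]

def gaussianIntegers : Subring ℂ := GaussianInt.toComplex.range

theorem isGaussianInt_iff_mem_gaussianIntegers {z : ℂ} :
    IsGaussianInt z ↔ z ∈ gaussianIntegers := by
  constructor
  · rintro ⟨a, b, rfl⟩
    exact ⟨⟨a, b⟩, GaussianInt.toComplex_def' a b⟩
  · rintro ⟨x, rfl⟩
    exact ⟨x.re, x.im, GaussianInt.toComplex_def x⟩

theorem eq_zero_of_mem_gaussianIntegers_of_norm_lt_one {z : ℂ} (hz : z ∈ gaussianIntegers)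
    (h : ‖z‖ < 1) : z = 0 := by
  obtain ⟨x, rfl⟩ := hz
  by_contra hx
  have hnorm : (1 : ℝ) ≤ x.norm := by
    exact_mod_cast GaussianInt.norm_pos.mpr fun h0 => hx (by rw [h0, map_zero])
  rw [GaussianInt.intCast_real_norm, Complex.normSq_eq_norm_sq] at hnorm
  nlinarith [norm_nonneg (GaussianInt.toComplex x)]

/-- The set `R_n`, described by a common denominator rather than as quotients. -/
def gaussianRatPoints (n : ℕ) : Set (ℂ × ℂ) :=
  {w | ∃ q ∈ gaussianIntegers, q ≠ 0 ∧ ‖q‖ < n ∧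
    w.1 * q ∈ gaussianIntegers ∧ w.2 * q ∈ gaussianIntegers}

theorem mem_gaussianRatPoints_of_eq_div {n : ℕ} {w : ℂ × ℂ}
    (h : ∃ z₁ z₂ q : ℂ, IsGaussianInt z₁ ∧ IsGaussianInt z₂ ∧ IsGaussianInt q ∧
      0 < ‖q‖ ∧ ‖q‖ < n ∧ w = (z₁ / q, z₂ / q)) :
    w ∈ gaussianRatPoints n := by
  obtain ⟨z₁, z₂, q, hz₁, hz₂, hq, hq0, hqn, rfl⟩ := h
  simp only [isGaussianInt_iff_mem_gaussianIntegers] at hz₁ hz₂ hq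
  have hq0 : q ≠ 0 := norm_pos_iff.mp hq0
  exact ⟨q, hq, hq0, hqn, by simpa [div_mul_cancel₀ _ hq0], by simpa [div_mul_cancel₀ _ hq0]⟩

theorem areaForm_sub_eq_zero_of_mem {n : ℕ} {x₁ x₂ : ℂ} {r₁ r₂ : ℝ}
    (hr : 8 * (r₁ * r₂) * n ^ 3 < 1) {p p' w : ℂ × ℂ}
    (hp : p ∈ closedBall x₁ r₁ ×ˢ closedBall x₂ r₂ ∩ gaussianRatPoints n)
    (hp' : p' ∈ closedBall x₁ r₁ ×ˢ closedBall x₂ r₂ ∩ gaussianRatPoints n)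
    (hw : w ∈ closedBall x₁ r₁ ×ˢ closedBall x₂ r₂ ∩ gaussianRatPoints n) :
    areaForm (p' - p) (w - p) = 0 := by
  obtain ⟨hpD, q, hq, hq0, hqn, hpq⟩ := hp
  obtain ⟨hp'D, q', hq', hq0', hqn', hp'q'⟩ := hp'
  obtain ⟨hwD, q'', hq'', hq0'', hqn'', hwq''⟩ := hw
  have harea := norm_areaForm_sub_le hpD hp'D hwD
  have hdenom : ‖q‖ * ‖q'‖ * ‖q''‖ ≤ (n : ℝ) ^ 3 := by
    rw [pow_three']
    gcongr
  have hlt : ‖areaForm (p' - p) (w - p) * (q * q' * q'')‖ < 1 :=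
    calc ‖areaForm (p' - p) (w - p) * (q * q' * q'')‖
        = ‖areaForm (p' - p) (w - p)‖ * (‖q‖ * ‖q'‖ * ‖q''‖) := by simp only [norm_mul]
      _ ≤ 8 * (r₁ * r₂) * n ^ 3 :=
        mul_le_mul harea hdenom (by positivity) ((norm_nonneg _).trans harea)
      _ < 1 := hr
  have hzero := eq_zero_of_mem_gaussianIntegers_of_norm_lt_one
    (areaForm_sub_mul_mem gaussianIntegers hpq hp'q' hwq'' hq hq' hq'') hlt
  simpa [hq0, hq0', hq0''] using hzero

/-- **complex Simplex Lemma.** There is `l̄_* > 0` such that for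
every integer `n ≥ 2`: if `D = B(x₁,r₁) × B(x₂,r₂) ⊆ ℂ²` with
`r₁ r₂ < e^{−l̄_*} n^{−3}`, then `D ∩ R_n` is contained in a complex affine
line `{w | a w₁ + b w₂ = c}` (with `(a,b) ≠ (0,0)`), where `R_n` consists of the
vectors `(z₁/q, z₂/q)` with `z₁, z₂, q` Gaussian integers and `0 < |q| < n`. -/
theorem stmt9 :
    ∃ lbar : ℝ, 0 < lbar ∧
      ∀ n : ℕ, 2 ≤ n →
        ∀ (x₁ x₂ : ℂ) (r₁ r₂ : ℝ), r₁ * r₂ < Real.exp (-lbar) / (n : ℝ) ^ 3 →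
          ∃ a b c : ℂ, (a, b) ≠ ((0 : ℂ), (0 : ℂ)) ∧
            ∀ w : ℂ × ℂ,
              w ∈ (closedBall x₁ r₁) ×ˢ (closedBall x₂ r₂) →
              (∃ z₁ z₂ q : ℂ, IsGaussianInt z₁ ∧ IsGaussianInt z₂ ∧ IsGaussianInt q ∧
                0 < ‖q‖ ∧ ‖q‖ < (n : ℝ) ∧ w = (z₁ / q, z₂ / q)) →
              a * w.1 + b * w.2 = c := by
  refine ⟨Real.log 8, Real.log_pos (by norm_num), fun n hn x₁ x₂ r₁ r₂ hr => ?_⟩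
  have hsmall : 8 * (r₁ * r₂) * n ^ 3 < 1 := by
    have hn3 : (0 : ℝ) < n ^ 3 := pow_pos (by exact_mod_cast (by omega : 0 < n)) 3
    rw [Real.exp_neg, Real.exp_log (by norm_num), lt_div_iff₀ hn3] at hr
    linarith
  obtain ⟨a, b, c, hab, hline⟩ := exists_line_of_areaForm_eq_zero
    (closedBall x₁ r₁ ×ˢ closedBall x₂ r₂ ∩ gaussianRatPoints n)
    fun p hp p' hp' w hw => areaForm_sub_eq_zero_of_mem hsmall hp hp' hw
  exact ⟨a, b, c, hab, fun w hD hR => hline w ⟨hD, mem_gaussianRatPoints_of_eq_div hR⟩⟩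
end

section
/- Let p be a prime and let m = μ × μ be the product measure on ℚ_p², where μ is the Haar measure on ℚ_p normalized so that μ(ℤ_p) = 1. Let n ≥ 2 be an integer and let D = B(x₁, r₁) × B(x₂, r₂) ⊆ ℤ_p² be a product of closed p-adic balls with m(D) < 1/(6 n³). Then there exists a p-adic affine line L ⊆ ℚ_p² such that R_n ∩ D ⊆ L, where R_n = { (z₁/q, z₂/q) ∈ ℚ_p² : z₁, z₂ ∈ ℤ, q ∈ ℕ, max(|z₁|, |z₂|, q) < n } and |z| denotes the usual (archimedean) absolute value of the integer z. -/
/-!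
If three points of `R_n ∩ D` were not collinear, clearing the denominators of their
determinant would give a nonzero integer: a `3 × 3` determinant of homogeneous coordinates
`(q, z₁, z₂)`, all of absolute value `< n`, hence of absolute value `< 6 n³`. Its `p`-adic
norm, and so that of the determinant, would exceed `1 / (6 n³)`. On the other hand, by the
ultrametric inequality the determinant is at most the product of the coordinate spreads of
the three points, and a ball of `ℤ_p` containing two points at distance `p⁻ᵏ` contains a
translate of `pᵏ ℤ_p`, of Haar measure `≥ p⁻ᵏ`. So the determinant is at most `m(D) < 1 / (6 n³)`.
-/

open Metric Set MeasureTheory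

def det2 {K : Type*} [CommRing K] (u v : K × K) : K := u.1 * v.2 - u.2 * v.1

theorem IsUltrametricDist.norm_det2_le {K : Type*} [NormedCommRing K] [IsUltrametricDist K]
    (u v : K × K) : ‖det2 u v‖ ≤ max ‖u.1‖ ‖v.1‖ * max ‖u.2‖ ‖v.2‖ :=
  calc ‖det2 u v‖ ≤ max ‖u.1 * v.2‖ ‖u.2 * v.1‖ := by
        simpa [det2, sub_eq_add_neg] using
          IsUltrametricDist.norm_add_le_max (u.1 * v.2) (-(u.2 * v.1))
    _ ≤ max ‖u.1‖ ‖v.1‖ * max ‖u.2‖ ‖v.2‖ := by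
        refine max_le ((norm_mul_le _ _).trans ?_) ((norm_mul_le _ _).trans ?_)
        · gcongr <;> simp
        · rw [mul_comm]; gcongr <;> simp

theorem exists_line_of_det2_eq_zero {K : Type*} [Field K] {S : Set (K × K)}
    (hS : ∀ P ∈ S, ∀ Q ∈ S, ∀ W ∈ S, det2 (Q - P) (W - P) = 0) :
    ∃ a b c : K, (a, b) ≠ (0, 0) ∧ ∀ w ∈ S, a * w.1 + b * w.2 = c := by
  by_cases hpair : ∃ P ∈ S, ∃ Q ∈ S, P ≠ Q
  · obtain ⟨P, hP, Q, hQ, hPQ⟩ := hpair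
    refine ⟨Q.2 - P.2, P.1 - Q.1, (Q.2 - P.2) * P.1 + (P.1 - Q.1) * P.2, ?_, fun w hw ↦ ?_⟩
    · intro h
      simp only [Prod.mk.injEq, sub_eq_zero] at h
      exact hPQ (Prod.ext h.2 h.1.symm)
    · have hcol := hS P hP Q hQ w hw
      simp only [det2, Prod.fst_sub, Prod.snd_sub] at hcol
      linear_combination -hcol
  · push Not at hpair
    rcases S.eq_empty_or_nonempty with rfl | ⟨P, hP⟩
    · exact ⟨1, 0, 0, by simp, by simp⟩
    · exact ⟨1, 0, P.1, by simp, fun w hw ↦ by simp [hpair w hw P hP]⟩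

def ratPointsHeightLt (K : Type*) [Field K] (n : ℕ) : Set (K × K) :=
  {w | ∃ (z₁ z₂ : ℤ) (q : ℕ), 0 < q ∧ max (max |z₁| |z₂|) (q : ℤ) < (n : ℤ) ∧
    w = ((z₁ : K) / (q : K), (z₂ : K) / (q : K))}

theorem exists_natCast_mul_det2_eq_intCast {K : Type*} [Field K] [CharZero K] {n : ℕ}
    {P Q W : K × K} (hP : P ∈ ratPointsHeightLt K n) (hQ : Q ∈ ratPointsHeightLt K n)
    (hW : W ∈ ratPointsHeightLt K n) :
    ∃ (q : ℕ) (M : ℤ), 0 < q ∧ |M| < 6 * n ^ 3 ∧ (q : K) * det2 (Q - P) (W - P) = M := by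
  obtain ⟨a₁, b₁, q₁, hq₁, h₁, rfl⟩ := hP
  obtain ⟨a₂, b₂, q₂, hq₂, h₂, rfl⟩ := hQ
  obtain ⟨a₃, b₃, q₃, hq₃, h₃, rfl⟩ := hW
  simp only [max_lt_iff] at h₁ h₂ h₃
  set A : Matrix (Fin 3) (Fin 3) ℤ := !![(q₁ : ℤ), a₁, b₁; (q₂ : ℤ), a₂, b₂; (q₃ : ℤ), a₃, b₃]
  have hA : ∀ i j, |A i j| ≤ (n : ℤ) - 1 := by
    intro i j
    fin_cases i <;> fin_cases j <;> simp [A] <;> omega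
  refine ⟨q₁ * q₂ * q₃, A.det, by positivity, ?_, ?_⟩
  · have hdet := Matrix.det_le (abv := AbsoluteValue.abs) hA
    have hn : (0 : ℤ) ≤ n - 1 := by omega
    have hcube : ((n : ℤ) - 1) ^ 3 < (n : ℤ) ^ 3 :=
      pow_lt_pow_left₀ (by omega) hn (by norm_num)
    simp only [AbsoluteValue.abs_apply, Fintype.card_fin, Nat.factorial, nsmul_eq_mul] at hdet
    push_cast at hdet
    linarith
  · have hq₁K : (q₁ : K) ≠ 0 := Nat.cast_ne_zero.mpr hq₁.ne'
    have hq₂K : (q₂ : K) ≠ 0 := Nat.cast_ne_zero.mpr hq₂.ne'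
    have hq₃K : (q₃ : K) ≠ 0 := Nat.cast_ne_zero.mpr hq₃.ne'
    simp only [A, Matrix.det_fin_three, Matrix.of_apply, Matrix.cons_val', Matrix.cons_val_zero,
      Matrix.cons_val_one, Matrix.cons_val, Matrix.cons_val_fin_one, det2, Prod.mk_sub_mk]
    push_cast
    field_simp
    ring

namespace Padic

variable {p : ℕ} [Fact p.Prime]

theorem inv_natAbs_le_norm_intCast {z : ℤ} (hz : z ≠ 0) :
    (z.natAbs : ℝ)⁻¹ ≤ ‖(z : ℚ_[p])‖ := by
  have hp : (0 : ℝ) < p := by exact_mod_cast (Fact.out : p.Prime).pos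
  have hdvd : p ^ padicValNat p z.natAbs ∣ z.natAbs := pow_padicValNat_dvd
  have hle : ((p ^ padicValNat p z.natAbs : ℕ) : ℝ) ≤ z.natAbs :=
    by exact_mod_cast Nat.le_of_dvd (Int.natAbs_pos.mpr hz) hdvd
  rw [norm_eq_zpow_neg_valuation (by exact_mod_cast hz), valuation_intCast, padicValInt,
    zpow_neg, zpow_natCast]
  push_cast at hle
  exact inv_anti₀ (by positivity) hle

theorem closedBall_one_subset_iUnion_closedBall (k : ℕ) :
    closedBall (0 : ℚ_[p]) 1 ⊆
      ⋃ j ∈ Finset.range (p ^ k), closedBall (j : ℚ_[p]) ((p : ℝ) ^ (-(k : ℤ))) := by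
  intro x hx
  rw [mem_closedBall_zero_iff] at hx
  set y : ℤ_[p] := ⟨x, hx⟩
  refine mem_biUnion (Finset.mem_range.mpr (y.appr_lt k)) ?_
  have h := (y - y.appr k).norm_le_pow_iff_mem_span_pow k |>.mpr (y.appr_spec k)
  rw [mem_closedBall, dist_eq_norm]
  rw [PadicInt.norm_def] at h
  push_cast at h
  exact h

section Haar

variable [MeasurableSpace ℚ_[p]] [BorelSpace ℚ_[p]] (μ : Measure ℚ_[p]) [μ.IsAddHaarMeasure]

theorem ofReal_zpow_le_addHaar_closedBall (hμ : μ (closedBall 0 1) = 1) (k : ℕ) :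
    ENNReal.ofReal ((p : ℝ) ^ (-(k : ℤ))) ≤ μ (closedBall 0 ((p : ℝ) ^ (-(k : ℤ)))) := by
  set ρ := (p : ℝ) ^ (-(k : ℤ))
  have hcover : (1 : ENNReal) ≤ (p ^ k : ℕ) * μ (closedBall 0 ρ) :=
    calc (1 : ENNReal) = μ (closedBall 0 1) := hμ.symm
      _ ≤ ∑ j ∈ Finset.range (p ^ k), μ (closedBall (j : ℚ_[p]) ρ) :=
        (measure_mono (closedBall_one_subset_iUnion_closedBall k)).trans
          (measure_biUnion_finset_le _ _)
      _ = (p ^ k : ℕ) * μ (closedBall 0 ρ) := by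
        simp [Measure.addHaar_closedBall_center]
  have hρ : ENNReal.ofReal ρ = ((p ^ k : ℕ) : ENNReal)⁻¹ := by
    have hp : (0 : ℝ) < p := by exact_mod_cast (Fact.out : p.Prime).pos
    rw [show ρ = ((p : ℝ) ^ k)⁻¹ by simp [ρ], ENNReal.ofReal_inv_of_pos (by positivity)]
    norm_cast
  have hpk : (p ^ k : ℕ) ≠ 0 := pow_ne_zero k (Fact.out : p.Prime).ne_zero
  rwa [hρ, ENNReal.inv_le_iff_le_mul (fun _ ↦ by exact_mod_cast hpk) (by simp)]

theorem ofReal_norm_sub_le_addHaar_closedBall (hμ : μ (closedBall 0 1) = 1) {x u v : ℚ_[p]}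
    {r : ℝ} (hu : u ∈ closedBall x r) (hv : v ∈ closedBall x r) (huv : ‖u - v‖ ≤ 1) :
    ENNReal.ofReal ‖u - v‖ ≤ μ (closedBall x r) := by
  rcases eq_or_ne u v with rfl | hne
  · simp
  have hval := (norm_le_one_iff_val_nonneg (u - v)).mp huv
  lift (u - v).valuation to ℕ using hval with k hk
  have hnorm : ‖u - v‖ = (p : ℝ) ^ (-(k : ℤ)) := by
    rw [norm_eq_zpow_neg_valuation (sub_ne_zero.mpr hne), hk]
  have hball : closedBall u ‖u - v‖ ⊆ closedBall x r := by
    rw [IsUltrametricDist.closedBall_eq_of_mem hu, ← dist_eq_norm]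
    apply closedBall_subset_closedBall
    rw [dist_comm, ← mem_closedBall, ← IsUltrametricDist.closedBall_eq_of_mem hu]
    exact hv
  calc ENNReal.ofReal ‖u - v‖ ≤ μ (closedBall u ‖u - v‖) := by
        rw [Measure.addHaar_closedBall_center, hnorm]
        exact ofReal_zpow_le_addHaar_closedBall μ hμ k
    _ ≤ μ (closedBall x r) := measure_mono hball

theorem ofReal_norm_det2_le_addHaar_prod {x₁ x₂ : ℚ_[p]} {r₁ r₂ : ℝ}
    (hD : closedBall x₁ r₁ ×ˢ closedBall x₂ r₂ ⊆
      {w : ℚ_[p] × ℚ_[p] | ‖w.1‖ ≤ 1 ∧ ‖w.2‖ ≤ 1})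
    (hμ : μ (closedBall 0 1) = 1) {P Q W : ℚ_[p] × ℚ_[p]}
    (hP : P ∈ closedBall x₁ r₁ ×ˢ closedBall x₂ r₂)
    (hQ : Q ∈ closedBall x₁ r₁ ×ˢ closedBall x₂ r₂)
    (hW : W ∈ closedBall x₁ r₁ ×ˢ closedBall x₂ r₂) :
    ENNReal.ofReal ‖det2 (Q - P) (W - P)‖ ≤
      (μ.prod μ) (closedBall x₁ r₁ ×ˢ closedBall x₂ r₂) := by
  have hsub {u v : ℚ_[p]} (hu : ‖u‖ ≤ 1) (hv : ‖v‖ ≤ 1) : ‖u - v‖ ≤ 1 := by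
    simpa [dist_eq_norm] using
      (dist_triangle_max u 0 v).trans (max_le (by simpa) (by simpa))
  have hside {x : ℚ_[p]} {r : ℝ} {u v w : ℚ_[p]} (hu : u ∈ closedBall x r)
      (hv : v ∈ closedBall x r) (hw : w ∈ closedBall x r) (hu1 : ‖u‖ ≤ 1) (hv1 : ‖v‖ ≤ 1)
      (hw1 : ‖w‖ ≤ 1) : ENNReal.ofReal (max ‖v - u‖ ‖w - u‖) ≤ μ (closedBall x r) := by
    rw [ENNReal.ofReal_max]
    exact max_le (ofReal_norm_sub_le_addHaar_closedBall μ hμ hv hu (hsub hv1 hu1))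
      (ofReal_norm_sub_le_addHaar_closedBall μ hμ hw hu (hsub hw1 hu1))
  obtain ⟨hP₁, hP₂⟩ := hD hP
  obtain ⟨hQ₁, hQ₂⟩ := hD hQ
  obtain ⟨hW₁, hW₂⟩ := hD hW
  calc ENNReal.ofReal ‖det2 (Q - P) (W - P)‖
      ≤ ENNReal.ofReal (max ‖Q.1 - P.1‖ ‖W.1 - P.1‖ * max ‖Q.2 - P.2‖ ‖W.2 - P.2‖) :=
        ENNReal.ofReal_le_ofReal (IsUltrametricDist.norm_det2_le _ _)
    _ = ENNReal.ofReal (max ‖Q.1 - P.1‖ ‖W.1 - P.1‖) *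
          ENNReal.ofReal (max ‖Q.2 - P.2‖ ‖W.2 - P.2‖) := ENNReal.ofReal_mul (by positivity)
    _ ≤ μ (closedBall x₁ r₁) * μ (closedBall x₂ r₂) :=
        mul_le_mul' (hside hP.1 hQ.1 hW.1 hP₁ hQ₁ hW₁) (hside hP.2 hQ.2 hW.2 hP₂ hQ₂ hW₂)
    _ = (μ.prod μ) (closedBall x₁ r₁ ×ˢ closedBall x₂ r₂) := (Measure.prod_prod _ _).symm

theorem det2_eq_zero_of_addHaar_prod_lt {n : ℕ} {x₁ x₂ : ℚ_[p]} {r₁ r₂ : ℝ}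
    (hD : closedBall x₁ r₁ ×ˢ closedBall x₂ r₂ ⊆
      {w : ℚ_[p] × ℚ_[p] | ‖w.1‖ ≤ 1 ∧ ‖w.2‖ ≤ 1})
    (hμ : μ (closedBall 0 1) = 1)
    (hm : (μ.prod μ) (closedBall x₁ r₁ ×ˢ closedBall x₂ r₂) <
      ENNReal.ofReal (1 / (6 * (n : ℝ) ^ 3)))
    {P Q W : ℚ_[p] × ℚ_[p]}
    (hP : P ∈ closedBall x₁ r₁ ×ˢ closedBall x₂ r₂ ∩ ratPointsHeightLt ℚ_[p] n)
    (hQ : Q ∈ closedBall x₁ r₁ ×ˢ closedBall x₂ r₂ ∩ ratPointsHeightLt ℚ_[p] n)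
    (hW : W ∈ closedBall x₁ r₁ ×ˢ closedBall x₂ r₂ ∩ ratPointsHeightLt ℚ_[p] n) :
    det2 (Q - P) (W - P) = 0 := by
  by_contra hdet
  obtain ⟨q, M, hq, hM, hqM⟩ := exists_natCast_mul_det2_eq_intCast hP.2 hQ.2 hW.2
  have hM0 : M ≠ 0 := by
    rintro rfl
    simp [hq.ne', hdet] at hqM
  have hlower : 1 / (6 * (n : ℝ) ^ 3) < ‖det2 (Q - P) (W - P)‖ :=
    calc 1 / (6 * (n : ℝ) ^ 3) < (M.natAbs : ℝ)⁻¹ := by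
          rw [one_div]
          refine inv_strictAnti₀ (by exact_mod_cast Int.natAbs_pos.mpr hM0) ?_
          rw [Int.abs_eq_natAbs] at hM
          exact_mod_cast hM
      _ ≤ ‖(M : ℚ_[p])‖ := inv_natAbs_le_norm_intCast hM0
      _ = ‖(q : ℚ_[p])‖ * ‖det2 (Q - P) (W - P)‖ := by rw [← hqM, norm_mul]
      _ ≤ ‖det2 (Q - P) (W - P)‖ :=
          mul_le_of_le_one_left (norm_nonneg _) (by exact_mod_cast norm_int_le_one q)
  exact hm.not_ge <| (ENNReal.ofReal_le_ofReal hlower.le).trans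
    (ofReal_norm_det2_le_addHaar_prod μ hD hμ hP.1 hQ.1 hW.1)

end Haar

end Padic

theorem stmt10_general (p : ℕ) [Fact p.Prime]
    [MeasurableSpace ℚ_[p]] [BorelSpace ℚ_[p]]
    (μ : Measure ℚ_[p]) [μ.IsAddHaarMeasure]
    (hμ : μ {x : ℚ_[p] | ‖x‖ ≤ 1} = 1)
    (n : ℕ)
    (x₁ x₂ : ℚ_[p]) (r₁ r₂ : ℝ)
    -- D ⊆ ℤ_p²
    (hD : (closedBall x₁ r₁) ×ˢ (closedBall x₂ r₂) ⊆
      {w : ℚ_[p] × ℚ_[p] | ‖w.1‖ ≤ 1 ∧ ‖w.2‖ ≤ 1})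
    -- m(D) < 1/(6n³)
    (hm : (μ.prod μ) ((closedBall x₁ r₁) ×ˢ (closedBall x₂ r₂)) <
      ENNReal.ofReal (1 / (6 * (n : ℝ) ^ 3))) :
    ∃ a b c : ℚ_[p], (a, b) ≠ ((0 : ℚ_[p]), (0 : ℚ_[p])) ∧
      ∀ w : ℚ_[p] × ℚ_[p],
        w ∈ (closedBall x₁ r₁) ×ˢ (closedBall x₂ r₂) →
        (∃ (z₁ z₂ : ℤ) (q : ℕ), 0 < q ∧ max (max |z₁| |z₂|) (q : ℤ) < (n : ℤ) ∧
          w = ((z₁ : ℚ_[p]) / (q : ℚ_[p]), (z₂ : ℚ_[p]) / (q : ℚ_[p]))) →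
        a * w.1 + b * w.2 = c := by
  have hμ' : μ (closedBall 0 1) = 1 := by
    rw [← hμ]
    congr 1
    ext
    simp
  obtain ⟨a, b, c, hab, hline⟩ := exists_line_of_det2_eq_zero fun P hP Q hQ W hW ↦
    Padic.det2_eq_zero_of_addHaar_prod_lt μ hD hμ' hm hP hQ hW
  exact ⟨a, b, c, hab, fun w hw hwR ↦ hline w ⟨hw, hwR⟩⟩

/-- **p-adic Simplex Lemma.** Let `m = μ × μ` where `μ` is the
Haar measure on `ℚ_p` with `μ(ℤ_p) = 1`. If `D = B(x₁,r₁) × B(x₂,r₂) ⊆ ℤ_p²`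
with `m(D) < 1/(6n³)`, then `R_n ∩ D` is contained in a `p`-adic affine line
`{w | a w₁ + b w₂ = c}` (with `(a,b) ≠ (0,0)`), where `R_n` consists of the
vectors `(z₁/q, z₂/q)` with `z₁, z₂ ∈ ℤ`, `q ∈ ℕ` and `max(|z₁|, |z₂|, q) < n`. -/
theorem stmt10 (p : ℕ) [Fact p.Prime]
    [MeasurableSpace ℚ_[p]] [BorelSpace ℚ_[p]]
    (μ : Measure ℚ_[p]) [μ.IsAddHaarMeasure] [SigmaFinite μ]
    (hμ : μ {x : ℚ_[p] | ‖x‖ ≤ 1} = 1)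
    (n : ℕ) (hn : 2 ≤ n)
    (x₁ x₂ : ℚ_[p]) (r₁ r₂ : ℝ)
    -- D ⊆ ℤ_p²
    (hD : (closedBall x₁ r₁) ×ˢ (closedBall x₂ r₂) ⊆
      {w : ℚ_[p] × ℚ_[p] | ‖w.1‖ ≤ 1 ∧ ‖w.2‖ ≤ 1})
    -- m(D) < 1/(6n³)
    (hm : (μ.prod μ) ((closedBall x₁ r₁) ×ˢ (closedBall x₂ r₂)) <
      ENNReal.ofReal (1 / (6 * (n : ℝ) ^ 3))) :
    ∃ a b c : ℚ_[p], (a, b) ≠ ((0 : ℚ_[p]), (0 : ℚ_[p])) ∧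
      ∀ w : ℚ_[p] × ℚ_[p],
        w ∈ (closedBall x₁ r₁) ×ˢ (closedBall x₂ r₂) →
        (∃ (z₁ z₂ : ℤ) (q : ℕ), 0 < q ∧ max (max |z₁| |z₂|) (q : ℤ) < (n : ℤ) ∧
          w = ((z₁ : ℚ_[p]) / (q : ℚ_[p]), (z₂ : ℚ_[p]) / (q : ℚ_[p]))) →
        a * w.1 + b * w.2 = c :=
  stmt10_general p μ hμ n x₁ x₂ r₁ r₂ hD hm
end

section
/- Let n ≥ 1, let M ∈ GL(n, ℝ), let t = ‖M‖ be the operator norm of M, and let v ∈ ℝⁿ be a unit vector with ‖M v‖ = t. Set V = (M v)^⊥ (the orthogonal complement of M v) and W = M^{−1}(V). Let τ > 0 and let Z ⊆ ℝⁿ be τ-separated, i.e. d(z₁, z₂) ≥ τ for all distinct z₁, z₂ ∈ Z. For z ∈ Z define Y(z) = (M^{−1}z + W) ∩ M^{−1}(B(z, τ/4)). Then for all distinct z₁, z₂ ∈ Z and all points y₁ ∈ Y(z₁), y₂ ∈ Y(z₂), one has d(y₁, y₂) ≥ τ/(2t). -/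
open Metric

theorem dist_sub_two_mul_le_of_mem_closedBall {X : Type*} [PseudoMetricSpace X]
    {a b z₁ z₂ : X} {r : ℝ} (ha : a ∈ closedBall z₁ r) (hb : b ∈ closedBall z₂ r) :
    dist z₁ z₂ - 2 * r ≤ dist a b := by
  rw [mem_closedBall] at ha hb
  linarith [dist_triangle4 z₁ a b z₂, dist_comm a z₁]

theorem ContinuousLinearMap.div_opNorm_le_dist {𝕜 E F : Type*} [NontriviallyNormedField 𝕜]
    [SeminormedAddCommGroup E] [SeminormedAddCommGroup F] [NormedSpace 𝕜 E] [NormedSpace 𝕜 F]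
    (f : E →L[𝕜] F) {s : ℝ} {x y : E} (h : s ≤ dist (f x) (f y)) :
    s / ‖f‖ ≤ dist x y := by
  rcases (norm_nonneg f).eq_or_lt with hf | hf
  · -- `s / 0 = 0`
    simp [← hf, dist_nonneg]
  · rw [div_le_iff₀' hf]
    exact h.trans (f.dist_le_opNorm x y)

theorem stmt15_general (n : ℕ)
    (M : EuclideanSpace ℝ (Fin n) →L[ℝ] EuclideanSpace ℝ (Fin n))
    (τ : ℝ)
    (Z : Set (EuclideanSpace ℝ (Fin n)))
    (hZ : ∀ z₁ ∈ Z, ∀ z₂ ∈ Z, z₁ ≠ z₂ → τ ≤ dist z₁ z₂)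
    (z₁ z₂ : EuclideanSpace ℝ (Fin n)) (hz₁ : z₁ ∈ Z) (hz₂ : z₂ ∈ Z) (hne : z₁ ≠ z₂)
    (y₁ y₂ : EuclideanSpace ℝ (Fin n))
    (hy₁B : M y₁ ∈ closedBall z₁ (τ / 4))
    (hy₂B : M y₂ ∈ closedBall z₂ (τ / 4)) :
    τ / (2 * ‖M‖) ≤ dist y₁ y₂ := by
  have hsep := hZ z₁ hz₁ z₂ hz₂ hne
  have himage : τ / 2 ≤ dist (M y₁) (M y₂) := by
    linarith [dist_sub_two_mul_le_of_mem_closedBall hy₁B hy₂B]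
  rw [← div_div]
  exact M.div_opNorm_le_dist himage

/-- Let `M ∈ GL(n, ℝ)`, `t = ‖M‖`, `v` a unit vector with
`‖M v‖ = t`, `W = M⁻¹((M v)^⊥)`, and let `Z` be `τ`-separated.  For `z ∈ Z` let
`Y(z) = (M⁻¹z + W) ∩ M⁻¹(B(z, τ/4))`, i.e. `y ∈ Y(z)` iff `⟪M y − z, M v⟫ = 0`
and `M y ∈ B(z, τ/4)`.  Then points of `Y(z₁)`, `Y(z₂)` for distinct
`z₁, z₂ ∈ Z` are at distance at least `τ/(2t)`. -/
theorem stmt15 (n : ℕ) (hn : 1 ≤ n)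
    (M : EuclideanSpace ℝ (Fin n) →L[ℝ] EuclideanSpace ℝ (Fin n))
    (hM : Function.Bijective M)
    (v : EuclideanSpace ℝ (Fin n)) (hv : ‖v‖ = 1) (hMv : ‖M v‖ = ‖M‖)
    (τ : ℝ) (hτ : 0 < τ)
    (Z : Set (EuclideanSpace ℝ (Fin n)))
    (hZ : ∀ z₁ ∈ Z, ∀ z₂ ∈ Z, z₁ ≠ z₂ → τ ≤ dist z₁ z₂)
    (z₁ z₂ : EuclideanSpace ℝ (Fin n)) (hz₁ : z₁ ∈ Z) (hz₂ : z₂ ∈ Z) (hne : z₁ ≠ z₂)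
    (y₁ y₂ : EuclideanSpace ℝ (Fin n))
    (hy₁W : (inner ℝ (M y₁ - z₁) (M v) : ℝ) = 0) (hy₁B : M y₁ ∈ closedBall z₁ (τ / 4))
    (hy₂W : (inner ℝ (M y₂ - z₂) (M v) : ℝ) = 0) (hy₂B : M y₂ ∈ closedBall z₂ (τ / 4)) :
    τ / (2 * ‖M‖) ≤ dist y₁ y₂ :=
  stmt15_general n M τ Z hZ z₁ z₂ hz₁ hz₂ hne y₁ y₂ hy₁B hy₂B
end
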